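/- Let M be a loopless laminar matroid with canonical presentation (E, 𝒜, c). Then every member of 𝒜 is a connected flat of M, and conversely every connected flat F of M with |F| ≥ 2 belongs to 𝒜. -/

import Mathlib

open Set Matroid

variable {α : Type*}

/-- A circuit: a minimal dependent set. -/
def Matroid.IsCircuit' (M : Matroid α) (C : Set α) : Prop :=
  M.Dep C ∧ ∀ D, D ⊂ C → M.Indep D

/-- The circuit characterization of laminar matroids. -/
def Matroid.IsLaminar (M : Matroid α) : Prop :=
  ∀ C₁ C₂, M.IsCircuit' C₁ → M.IsCircuit' C₂ → (C₁ ∩ C₂).Nonempty →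
    M.closure C₁ ⊆ M.closure C₂ ∨ M.closure C₂ ⊆ M.closure C₁

/-- A laminar family: any two intersecting members are comparable. -/
def IsLaminarFamily (𝒜 : Set (Set α)) : Prop :=
  ∀ A ∈ 𝒜, ∀ B ∈ 𝒜, (A ∩ B).Nonempty → A ⊆ B ∨ B ⊆ A

/-- `M` is presented by the laminar family `𝒜` with capacities `c`. -/
def Matroid.IsLaminarPresBy (M : Matroid α) (E : Set α) (𝒜 : Set (Set α)) (c : Set α → ℕ) :
    Prop :=
  M.E = E ∧ ∀ I, M.Indep I ↔ I ⊆ E ∧ ∀ A ∈ 𝒜, (I ∩ A).ncard ≤ c A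

/-- `M` has some laminar presentation (on its own ground set); this captures being
isomorphic to a laminar matroid `M(E, 𝒜, c)`. -/
def Matroid.HasLaminarPres (M : Matroid α) : Prop :=
  ∃ (𝒜 : Set (Set α)) (c : Set α → ℕ), IsLaminarFamily 𝒜 ∧ (∀ A ∈ 𝒜, A ⊆ M.E) ∧
    M.IsLaminarPresBy M.E 𝒜 c

/-- `A` is essential in the presentation `(E, 𝒜, c)`: removing it changes the matroid. -/
def Essential (E : Set α) (𝒜 : Set (Set α)) (c : Set α → ℕ) (A : Set α) : Prop :=
  ∃ I ⊆ E, (∀ B ∈ 𝒜, B ≠ A → (I ∩ B).ncard ≤ c B) ∧ c A < (I ∩ A).ncard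

/-- A canonical presentation of a loopless laminar matroid: every member is essential. -/
def IsCanonical (E : Set α) (𝒜 : Set (Set α)) (c : Set α → ℕ) : Prop :=
  ∀ A ∈ 𝒜, Essential E 𝒜 c A

/-- A matroid is loopless if every singleton of the ground set is independent. -/
def Matroid.Loopless' (M : Matroid α) : Prop := ∀ e ∈ M.E, M.Indep {e}

/-- Connectivity: every pair of distinct elements lies in a common circuit. -/
def Matroid.IsConnected' (M : Matroid α) : Prop :=
  ∀ e ∈ M.E, ∀ f ∈ M.E, e ≠ f → ∃ C, M.IsCircuit' C ∧ e ∈ C ∧ f ∈ C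

/-!
Canonicity makes the capacities strictly increasing along `𝒜` and gives every `A ∈ 𝒜` a set of
`c A + 1` of its elements violating only the constraint of `A`; such a set is a circuit. An
independent `K ⊆ A` with `|K| = c A` spans exactly `A`: adding a point outside `A` keeps it
independent, because `c` grows along `𝒜`. Hence `A`, the closure of such a circuit, is a flat.
For `e ≠ f` in `A`, let `A'` be the least member containing both; the constraints of `𝒜 \ {A'}`
form a laminar matroid in which `{e, f}` augments to a circuit of `M` of size `c A' + 1`.
Conversely, every circuit spans a member of `𝒜`, so in a connected flat `F` every pair `e, g`
lies in a member of `𝒜` inside `F`; by laminarity the largest such member through `e` is `F`.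
-/

def WithinCapacity (ℬ : Set (Set α)) (c : Set α → ℕ) (I : Set α) : Prop :=
  ∀ B ∈ ℬ, (I ∩ B).ncard ≤ c B

section LaminarMatroid

variable {ℬ : Set (Set α)} {c : Set α → ℕ} {I J : Set α}

lemma WithinCapacity.subset (hI : WithinCapacity ℬ c I) (hJI : J ⊆ I) (hIfin : I.Finite) :
    WithinCapacity ℬ c J := fun B hB =>
  (ncard_le_ncard (inter_subset_inter_left B hJI) (hIfin.inter_of_left B)).trans (hI B hB)

lemma IsLaminarFamily.mono {ℬ' : Set (Set α)} (h : ℬ' ⊆ ℬ) (hℬ : IsLaminarFamily ℬ) :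
    IsLaminarFamily ℬ' := fun A hA B hB => hℬ A (h hA) B (h hB)

lemma IsLaminarFamily.ncard_le_of_forall_mem_tight (hℬ : IsLaminarFamily ℬ) (hfin : ℬ.Finite)
    (hI : I.Finite) (hJ : J.Finite) (hJc : WithinCapacity ℬ c J)
    (htight : ∀ x ∈ J \ I, ∃ B ∈ ℬ, x ∈ B ∧ c B ≤ (I ∩ B).ncard) : J.ncard ≤ I.ncard := by
  induction hn : (J \ I).ncard using Nat.strong_induction_on generalizing I J with
  | _ n ih =>
  obtain hJI | ⟨x, hx⟩ := (J \ I).eq_empty_or_nonempty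
  · exact ncard_le_ncard (sdiff_eq_empty.1 hJI) hI
  obtain ⟨B₀, hB₀⟩ := htight x hx
  obtain ⟨T, ⟨hT, hxT, hTt⟩, hTmax⟩ :=
    (hfin.subset (sep_subset ℬ fun B => x ∈ B ∧ c B ≤ (I ∩ B).ncard)).exists_maximal ⟨B₀, hB₀⟩
  -- Remove the maximal tight member `T` through `x`; the other witnesses are disjoint from `T`.
  have hrest : (J \ T).ncard ≤ (I \ T).ncard := by
    have hsub : (J \ T) \ (I \ T) ⊆ J \ I :=
      fun y ⟨⟨hyJ, hyT⟩, hyIT⟩ => ⟨hyJ, fun hyI => hyIT ⟨hyI, hyT⟩⟩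
    refine ih _ ?_ hI.sdiff hJ.sdiff (hJc.subset sdiff_subset hJ) ?_ rfl
    · rw [← hn]
      exact ncard_lt_ncard ((ssubset_iff_of_subset hsub).2 ⟨x, hx, fun h => h.1.2 hxT⟩) hJ.sdiff
    · rintro y ⟨⟨hyJ, hyT⟩, hyIT⟩
      obtain ⟨B, hB, hyB, hBt⟩ := htight y ⟨hyJ, fun hyI => hyIT ⟨hyI, hyT⟩⟩
      have hBT : Disjoint B T := by
        rw [disjoint_iff_inter_eq_empty, ← not_nonempty_iff_eq_empty]
        intro hne
        rcases hℬ B hB T hT hne with hBT | hTB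
        · exact hyT (hBT hyB)
        · exact hyT (hTmax ⟨hB, hTB hxT, hBt⟩ hTB hyB)
      refine ⟨B, hB, hyB, ?_⟩
      rwa [sdiff_inter_right_comm, (hBT.mono_left inter_subset_right).sdiff_eq_left]
  calc J.ncard = (J ∩ T).ncard + (J \ T).ncard := (ncard_inter_add_ncard_sdiff_eq_ncard J T hJ).symm
    _ ≤ (I ∩ T).ncard + (I \ T).ncard := add_le_add ((hJc T hT).trans hTt) hrest
    _ = I.ncard := ncard_inter_add_ncard_sdiff_eq_ncard I T hI

lemma IsLaminarFamily.exists_insert_withinCapacity (hℬ : IsLaminarFamily ℬ) (hfin : ℬ.Finite)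
    (hI : I.Finite) (hJ : J.Finite) (hIc : WithinCapacity ℬ c I) (hJc : WithinCapacity ℬ c J)
    (hlt : I.ncard < J.ncard) : ∃ x ∈ J \ I, WithinCapacity ℬ c (insert x I) := by
  unfold WithinCapacity at hIc ⊢
  by_contra! h
  refine hlt.not_ge (hℬ.ncard_le_of_forall_mem_tight hfin hI hJ hJc fun x hx => ?_)
  obtain ⟨B, hB, hBlt⟩ := h x hx
  have hxB : x ∈ B := by
    by_contra hxB
    rw [insert_inter_of_notMem hxB] at hBlt
    exact hBlt.not_ge (hIc B hB)
  rw [insert_inter_of_mem hxB] at hBlt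
  exact ⟨B, hB, hxB, Nat.lt_succ_iff.1 (hBlt.trans_le (ncard_insert_le x _))⟩

def laminarMatroid (E : Set α) (hE : E.Finite) (ℬ : Set (Set α)) (hℬ : IsLaminarFamily ℬ)
    (hfin : ℬ.Finite) (c : Set α → ℕ) : Matroid α :=
  (IndepMatroid.ofFinite hE (fun I => I ⊆ E ∧ WithinCapacity ℬ c I)
    ⟨empty_subset E, fun B _ => by simp⟩
    (fun _ _ hJ hIJ => ⟨hIJ.trans hJ.1, hJ.2.subset hIJ (hE.subset hJ.1)⟩)
    (fun _ _ hI hJ hlt => by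
      obtain ⟨x, hx, hxI⟩ := hℬ.exists_insert_withinCapacity hfin (hE.subset hI.1)
        (hE.subset hJ.1) hI.2 hJ.2 hlt
      exact ⟨x, hx.1, hx.2, insert_subset (hJ.1 hx.1) hI.1, hxI⟩)
    (fun _ hI => hI.1)).matroid

@[simp] lemma laminarMatroid_indep_iff {E : Set α} {hE : E.Finite} {hℬ : IsLaminarFamily ℬ}
    {hfin : ℬ.Finite} :
    (laminarMatroid E hE ℬ hℬ hfin c).Indep I ↔ I ⊆ E ∧ WithinCapacity ℬ c I := by
  simp [laminarMatroid]

end LaminarMatroid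

namespace Matroid

variable {M : Matroid α} {I J C R : Set α} {n : ℕ}

lemma Indep.exists_subset_union_ncard_eq (hI : M.Indep I) (hJ : M.Indep J) (hIfin : I.Finite)
    (hJfin : J.Finite) (hIn : I.ncard ≤ n) (hnJ : n ≤ J.ncard) :
    ∃ C, I ⊆ C ∧ C ⊆ I ∪ J ∧ M.Indep C ∧ C.ncard = n := by
  have hfin : (I ∪ J).Finite := hIfin.union hJfin
  obtain ⟨B, hB, hIB⟩ := hI.subset_isBasis_of_subset (subset_union_left (t := J))
  obtain ⟨B', hB', hJB'⟩ := hJ.subset_isBasis_of_subset (subset_union_right (s := I))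
  have hBB' := hB'.encard_eq_encard hB
  rw [← (hfin.subset hB'.subset).cast_ncard_eq, ← (hfin.subset hB.subset).cast_ncard_eq,
    Nat.cast_inj] at hBB'
  obtain ⟨C, hIC, hCB, rfl⟩ := exists_subsuperset_card_eq hIB hIn
    ((hnJ.trans (ncard_le_ncard hJB' (hfin.subset hB'.subset))).trans hBB'.le)
  exact ⟨C, hIC, hCB.trans hB.subset, hB.indep.subset hCB, rfl⟩

lemma isCircuit'_iff : M.IsCircuit' C ↔ M.IsCircuit C :=
  isCircuit_iff_forall_ssubset.symm

lemma restrict_isCircuit'_iff (hR : R ⊆ M.E) :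
    (M ↾ R).IsCircuit' C ↔ M.IsCircuit' C ∧ C ⊆ R := by
  simp only [isCircuit'_iff, restrict_isCircuit_iff hR]

end Matroid

lemma IsLaminarFamily.mem_of_forall_exists_mem {ℬ : Set (Set α)} {F : Set α} {e f : α}
    (hℬ : IsLaminarFamily ℬ) (hfin : ℬ.Finite) (hf : f ∈ F) (hfe : f ≠ e)
    (hF : ∀ g ∈ F, g ≠ e → ∃ A ∈ ℬ, A ⊆ F ∧ e ∈ A ∧ g ∈ A) : F ∈ ℬ := by
  obtain ⟨A₀, hA₀, hA₀F, heA₀, -⟩ := hF f hf hfe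
  obtain ⟨A, ⟨hA, hAF, heA⟩, hAmax⟩ :=
    (hfin.subset (sep_subset ℬ fun A => A ⊆ F ∧ e ∈ A)).exists_maximal ⟨A₀, hA₀, hA₀F, heA₀⟩
  suffices hFA : F ⊆ A from hAF.antisymm hFA ▸ hA
  intro g hg
  obtain rfl | hge := eq_or_ne g e
  · exact heA
  obtain ⟨B, hB, hBF, heB, hgB⟩ := hF g hg hge
  rcases hℬ A hA B hB ⟨e, heA, heB⟩ with hAB | hBA
  · exact hAmax ⟨hB, hBF, heB⟩ hAB hgB
  · exact hBA hgB

section CanonicalPresentation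

variable {E A B C I K : Set α} {𝒜 : Set (Set α)} {c : Set α → ℕ} {M : Matroid α} {e f x : α}

lemma Essential.capacity_lt (hE : E.Finite) (hA : Essential E 𝒜 c A) (hB : B ∈ 𝒜)
    (hAB : A ⊂ B) : c A < c B := by
  obtain ⟨I, hIE, hIc, hIA⟩ := hA
  calc c A < (I ∩ A).ncard := hIA
    _ ≤ (I ∩ B).ncard :=
      ncard_le_ncard (inter_subset_inter_right I hAB.subset) ((hE.subset hIE).inter_of_left B)
    _ ≤ c B := hIc B hB hAB.ne'

lemma Essential.exists_subset_ncard_eq (hE : E.Finite) (hA : Essential E 𝒜 c A) :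
    ∃ J ⊆ A, J.ncard = c A + 1 ∧ WithinCapacity (𝒜 \ {A}) c J := by
  obtain ⟨I, hIE, hIc, hIA⟩ := hA
  obtain ⟨J, hJ, hJcard⟩ := exists_subset_card_eq (show c A + 1 ≤ (I ∩ A).ncard from hIA)
  have hIc' : WithinCapacity (𝒜 \ {A}) c I := fun B hB => hIc B hB.1 hB.2
  exact ⟨J, hJ.trans inter_subset_right, hJcard,
    hIc'.subset (hJ.trans inter_subset_left) (hE.subset hIE)⟩

namespace Matroid.IsLaminarPresBy

lemma indep_iff (hM : M.IsLaminarPresBy E 𝒜 c) : M.Indep I ↔ I ⊆ E ∧ WithinCapacity 𝒜 c I :=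
  hM.2 I

lemma not_indep_of_capacity_lt (hM : M.IsLaminarPresBy E 𝒜 c) (hA : A ∈ 𝒜)
    (h : c A < (I ∩ A).ncard) : ¬ M.Indep I :=
  fun hI => h.not_ge ((hM.indep_iff.1 hI).2 A hA)

lemma withinCapacity_singleton (hM : M.IsLaminarPresBy E 𝒜 c) (hloop : M.Loopless')
    (hx : x ∈ E) : WithinCapacity 𝒜 c {x} :=
  (hM.indep_iff.1 (hloop x (hM.1 ▸ hx))).2

lemma one_le_capacity (hM : M.IsLaminarPresBy E 𝒜 c) (hloop : M.Loopless') (hAE : A ⊆ E)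
    (hA : A ∈ 𝒜) (hx : x ∈ A) : 1 ≤ c A := by
  simpa [inter_eq_left.2 (singleton_subset_iff.2 hx)] using
    hM.withinCapacity_singleton hloop (hAE hx) A hA

lemma isCircuit'_of_ncard_eq (hM : M.IsLaminarPresBy E 𝒜 c) (hA : A ∈ 𝒜) (hAE : A ⊆ E)
    (hCA : C ⊆ A) (hCc : C.ncard = c A + 1) (hC : WithinCapacity (𝒜 \ {A}) c C) :
    M.IsCircuit' C := by
  have hCfin : C.Finite := finite_of_ncard_ne_zero (by omega)
  refine ⟨⟨hM.not_indep_of_capacity_lt hA (by rw [inter_eq_left.2 hCA]; omega),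
    hM.1 ▸ hCA.trans hAE⟩, fun D hDC => hM.indep_iff.2 ⟨hDC.subset.trans (hCA.trans hAE), ?_⟩⟩
  intro B hB
  obtain rfl | hBA := eq_or_ne B A
  · have := ncard_lt_ncard hDC hCfin
    have := ncard_inter_le_ncard_left D B (hCfin.subset hDC.subset)
    omega
  · exact hC.subset hDC.subset hCfin B ⟨hB, hBA⟩

lemma exists_mem_ncard_eq_of_isCircuit' (hM : M.IsLaminarPresBy E 𝒜 c) (hE : E.Finite)
    (hC : M.IsCircuit' C) : ∃ A ∈ 𝒜, C ⊆ A ∧ C.ncard = c A + 1 := by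
  obtain ⟨hdep, hmin⟩ := hC
  have hCE : C ⊆ E := hM.1 ▸ hdep.subset_ground
  obtain ⟨A, hA, hAC⟩ : ∃ A ∈ 𝒜, c A < (C ∩ A).ncard := by
    by_contra! h
    exact hdep.not_indep (hM.indep_iff.2 ⟨hCE, h⟩)
  have hCA : C ⊆ A := by
    by_contra hCA
    exact hM.not_indep_of_capacity_lt hA (by rwa [inter_assoc, inter_self])
      (hmin _ ⟨inter_subset_left, fun h => hCA fun y hy => (h hy).2⟩)
  rw [inter_eq_left.2 hCA] at hAC
  obtain ⟨y, hy⟩ := nonempty_of_ncard_ne_zero (by omega : C.ncard ≠ 0)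
  have hK := (hM.indep_iff.1 (hmin _ (sdiff_singleton_ssubset.2 hy))).2 A hA
  rw [inter_eq_left.2 (sdiff_subset.trans hCA)] at hK
  have := ncard_sdiff_singleton_add_one hy (hE.subset hCE)
  exact ⟨A, hA, hCA, by omega⟩

end Matroid.IsLaminarPresBy

structure Matroid.IsCanonicalLaminarPres (M : Matroid α) (E : Set α) (𝒜 : Set (Set α))
    (c : Set α → ℕ) : Prop where
  finite_ground : E.Finite
  subset_ground : ∀ A ∈ 𝒜, A ⊆ E
  laminar : IsLaminarFamily 𝒜
  pres : M.IsLaminarPresBy E 𝒜 c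
  canonical : IsCanonical E 𝒜 c
  loopless : M.Loopless'

namespace Matroid.IsCanonicalLaminarPres

lemma finite_family (hP : M.IsCanonicalLaminarPres E 𝒜 c) : 𝒜.Finite :=
  hP.finite_ground.finite_subsets.subset hP.subset_ground

lemma indep_insert_of_notMem (hP : M.IsCanonicalLaminarPres E 𝒜 c) (hA : A ∈ 𝒜)
    (hK : M.Indep K) (hKA : K ⊆ A) (hKc : K.ncard = c A) (hx : x ∈ E) (hxA : x ∉ A) :
    M.Indep (insert x K) := by
  have hKfin : K.Finite := hP.finite_ground.subset (hKA.trans (hP.subset_ground A hA))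
  refine hP.pres.indep_iff.2 ⟨insert_subset hx (hP.pres.indep_iff.1 hK).1, fun B hB => ?_⟩
  by_cases hxB : x ∈ B
  · rw [insert_inter_of_mem hxB]
    refine (ncard_insert_le x _).trans ?_
    rcases (A ∩ B).eq_empty_or_nonempty with hAB | hAB
    · have hKB : K ∩ B = ∅ := subset_empty_iff.1 (hAB ▸ inter_subset_inter_left B hKA)
      rw [hKB, ncard_empty]
      exact hP.pres.one_le_capacity hP.loopless (hP.subset_ground B hB) hB hxB
    rcases hP.laminar A hA B hB hAB with hAB | hBA
    · have := (hP.canonical A hA).capacity_lt hP.finite_ground hB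
        (hAB.ssubset_of_ne fun h => hxA (h ▸ hxB))
      have := ncard_inter_le_ncard_left K B hKfin
      omega
    · exact absurd (hBA hxB) hxA
  · rw [insert_inter_of_notMem hxB]
    exact (hP.pres.indep_iff.1 hK).2 B hB

lemma closure_eq_of_indep_of_ncard_eq (hP : M.IsCanonicalLaminarPres E 𝒜 c) (hA : A ∈ 𝒜)
    (hK : M.Indep K) (hKA : K ⊆ A) (hKc : K.ncard = c A) : M.closure K = A := by
  ext x
  rw [hK.mem_closure_iff']
  constructor
  · rintro ⟨hxE, hx⟩
    by_contra hxA
    exact hxA (hKA (hx (hP.indep_insert_of_notMem hA hK hKA hKc (hP.pres.1 ▸ hxE) hxA)))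
  · intro hxA
    refine ⟨hP.pres.1 ▸ hP.subset_ground A hA hxA, fun hins => ?_⟩
    by_contra hxK
    have hKfin : K.Finite := hP.finite_ground.subset (hKA.trans (hP.subset_ground A hA))
    refine hP.pres.not_indep_of_capacity_lt hA ?_ hins
    rw [inter_eq_left.2 (insert_subset hxA hKA), ncard_insert_of_notMem hxK hKfin]
    omega

lemma closure_eq_of_isCircuit' (hP : M.IsCanonicalLaminarPres E 𝒜 c) (hA : A ∈ 𝒜)
    (hC : M.IsCircuit' C) (hCA : C ⊆ A) (hCc : C.ncard = c A + 1) : M.closure C = A := by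
  obtain ⟨x, hx⟩ := nonempty_of_ncard_ne_zero (by omega : C.ncard ≠ 0)
  have hKc := ncard_sdiff_singleton_add_one hx (finite_of_ncard_ne_zero (by omega : C.ncard ≠ 0))
  have hK := hP.closure_eq_of_indep_of_ncard_eq hA (hC.2 _ (sdiff_singleton_ssubset.2 hx))
    (sdiff_subset.trans hCA) (by omega)
  rw [← insert_sdiff_self_of_mem hx, closure_insert_eq_of_mem_closure (hK ▸ hCA hx), hK]

lemma isFlat_of_mem (hP : M.IsCanonicalLaminarPres E 𝒜 c) (hA : A ∈ 𝒜) : M.IsFlat A := by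
  obtain ⟨J, hJA, hJc, hJcap⟩ := (hP.canonical A hA).exists_subset_ncard_eq hP.finite_ground
  have hJ := hP.pres.isCircuit'_of_ncard_eq hA (hP.subset_ground A hA) hJA hJc hJcap
  rw [← hP.closure_eq_of_isCircuit' hA hJ hJA hJc]
  exact isFlat_closure J

lemma withinCapacity_pair (hP : M.IsCanonicalLaminarPres E 𝒜 c)
    (hA : Minimal (fun B => B ∈ 𝒜 ∧ e ∈ B ∧ f ∈ B) A) : WithinCapacity (𝒜 \ {A}) c {e, f} := by
  obtain ⟨⟨hA, heA, hfA⟩, hmin⟩ := hA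
  have hAE := hP.subset_ground A hA
  rintro B ⟨hB, hBA⟩
  by_cases heB : e ∈ B
  · by_cases hfB : f ∈ B
    · rcases hP.laminar A hA B hB ⟨e, heA, heB⟩ with hAB | hBA'
      · have := hP.pres.one_le_capacity hP.loopless hAE hA heA
        have := (hP.canonical A hA).capacity_lt hP.finite_ground hB
          (hAB.ssubset_of_ne (Ne.symm hBA))
        have := (ncard_le_ncard (inter_subset_left : {e, f} ∩ B ⊆ {e, f})).trans
          (ncard_insert_le e {f})
        simp only [ncard_singleton] at this
        omega
      · exact absurd ((hmin ⟨hB, heB, hfB⟩ hBA').antisymm hBA').symm hBA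
    · rw [pair_comm, insert_inter_of_notMem hfB]
      exact hP.pres.withinCapacity_singleton hP.loopless (hAE heA) B hB
  · rw [insert_inter_of_notMem heB]
    exact hP.pres.withinCapacity_singleton hP.loopless (hAE hfA) B hB

lemma exists_isCircuit'_of_mem (hP : M.IsCanonicalLaminarPres E 𝒜 c) (hA : A ∈ 𝒜) (he : e ∈ A)
    (hf : f ∈ A) : ∃ C ⊆ A, M.IsCircuit' C ∧ e ∈ C ∧ f ∈ C := by
  obtain ⟨A', hA'min⟩ := (hP.finite_family.subset
    (sep_subset 𝒜 fun B => e ∈ B ∧ f ∈ B)).exists_minimal ⟨A, hA, he, hf⟩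
  have hpair := hP.withinCapacity_pair hA'min
  obtain ⟨⟨hA', heA', hfA'⟩, hmin⟩ := hA'min
  have hA'A : A' ⊆ A := by
    rcases hP.laminar A' hA' A hA ⟨e, heA', he⟩ with h | h
    exacts [h, hmin ⟨hA, he, hf⟩ h]
  have hA'E := hP.subset_ground A' hA'
  obtain ⟨J, hJA', hJc, hJcap⟩ := (hP.canonical A' hA').exists_subset_ncard_eq hP.finite_ground
  let N := laminarMatroid A' (hP.finite_ground.subset hA'E) (𝒜 \ {A'})
    (hP.laminar.mono sdiff_subset) (hP.finite_family.subset sdiff_subset) c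
  have hcap := hP.pres.one_le_capacity hP.loopless hA'E hA' heA'
  obtain ⟨C, hpC, -, hC, hCc⟩ :=
    (show N.Indep {e, f} by simp [N, pair_subset heA' hfA', hpair]).exists_subset_union_ncard_eq
      (show N.Indep J by simp [N, hJA', hJcap]) (toFinite _)
      (finite_of_ncard_ne_zero (by omega : J.ncard ≠ 0))
      (((ncard_insert_le e {f}).trans (by simp)).trans (by omega : 2 ≤ c A' + 1)) hJc.ge
  rw [laminarMatroid_indep_iff] at hC
  exact ⟨C, hC.1.trans hA'A, hP.pres.isCircuit'_of_ncard_eq hA' hA'E hC.1 hCc hC.2,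
    hpC (mem_insert e {f}), hpC (mem_insert_of_mem e rfl)⟩

end Matroid.IsCanonicalLaminarPres

end CanonicalPresentation

theorem stmt_18 (E : Set α) (hE : E.Finite)
    (𝒜 : Set (Set α)) (h𝒜E : ∀ A ∈ 𝒜, A ⊆ E) (h𝒜 : IsLaminarFamily 𝒜)
    (c : Set α → ℕ) (M : Matroid α) (hM : M.IsLaminarPresBy E 𝒜 c)
    (hcanon : IsCanonical E 𝒜 c) (hloop : M.Loopless') :
    (∀ A ∈ 𝒜, M.IsFlat A ∧ (M ↾ A).IsConnected') ∧
      (∀ F, M.IsFlat F → (M ↾ F).IsConnected' → 2 ≤ F.ncard → F ∈ 𝒜) := by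
  have hP : M.IsCanonicalLaminarPres E 𝒜 c := ⟨hE, h𝒜E, h𝒜, hM, hcanon, hloop⟩
  refine ⟨fun A hA => ⟨hP.isFlat_of_mem hA, fun e he f hf _ => ?_⟩, fun F hF hconn hF2 => ?_⟩
  · obtain ⟨C, hCA, hC, heC, hfC⟩ := hP.exists_isCircuit'_of_mem hA he hf
    exact ⟨C, (restrict_isCircuit'_iff (hM.1 ▸ h𝒜E A hA)).2 ⟨hC, hCA⟩, heC, hfC⟩
  · obtain ⟨e, f, he, hf, hef⟩ :=
      (one_lt_ncard_iff (hE.subset (hM.1 ▸ hF.subset_ground))).1 hF2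
    refine h𝒜.mem_of_forall_exists_mem hP.finite_family hf hef.symm fun g hg hge => ?_
    obtain ⟨C, hC, hgC, heC⟩ := hconn g hg e he hge
    obtain ⟨hC, hCF⟩ := (restrict_isCircuit'_iff hF.subset_ground).1 hC
    obtain ⟨A, hA, hCA, hCc⟩ := hM.exists_mem_ncard_eq_of_isCircuit' hE hC
    refine ⟨A, hA, ?_, hCA heC, hCA hgC⟩
    rw [← hP.closure_eq_of_isCircuit' hA hC hCA hCc]
    exact (M.closure_subset_closure hCF).trans hF.closure.subset
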